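/- Let k be a field, A a non-unital k-algebra, and U := Unitization k A its unitalization. Let P be a finitely generated projective left U-module, and set P♯ := (P ⧸ A•P) ⊗_k U, a left U-module via the action of U on the right tensor factor. Then: (i) P♯ is a finitely generated projective (indeed free) U-module; (ii) there exist U-linear maps φ : P → P♯ and ψ : P♯ → P such that (id_P − ψ∘φ)(P) ⊆ A•P and (id_{P♯} − φ∘ψ)(P♯) ⊆ A•P♯; and (iii) for any such φ and ψ, letting E denote the two-term chain complex with P in degree 1, P♯ in degree 0 and differential φ, the inclusion of the subcomplex E·A (with degree-n term A•E_n) into E is a homotopy equivalence of chain complexes. -/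

import Mathlib

/-!
Write `U = Unitization k A` and `V = P ⧸ A•P`. Since `A` acts trivially on `V`, the action map
`U ⊗ₖ V → V` has kernel `A•(U ⊗ₖ V)`; as `P♯ ≅ U ⊗ₖ V`, the module `P♯` is free and
`P♯ ⧸ A•P♯ ≅ P ⧸ A•P`. Lifting this isomorphism and its inverse along the projective modules `P`
and `P♯` gives `φ` and `ψ`.

For (iii), `ψ`, placed as a map from degree `0` to degree `1`, is a homotopy from `id_E` to
`r = id_E - (φψ + ψφ)`, whose components `id - ψφ` and `id - φψ` take values in `E·A`. Whenever
the identity of a complex `M` is homotopic to a chain map with values in `M·I`, the inclusion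
`M·I → M` is a homotopy equivalence: the corestricted map is a homotopy inverse, since the same
homotopy restricts to `M·I`.
-/

open CategoryTheory
open scoped TensorProduct

section Subcomplex

lemma smul_top_le {R : Type} [Ring R] {X Y : Type} [AddCommGroup X] [Module R X]
    [AddCommGroup Y] [Module R Y] (I : Ideal R) (f : X →ₗ[R] Y) :
    ∀ x ∈ I • (⊤ : Submodule R X), f x ∈ I • (⊤ : Submodule R Y) := by
  intro x hx
  have h1 : f x ∈ (I • (⊤ : Submodule R X)).map f := Submodule.mem_map_of_mem hx
  rw [Submodule.map_smul''] at h1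
  have h2 : I • (⊤ : Submodule R X).map f ≤ I • (⊤ : Submodule R Y) :=
    smul_mono_right I le_top
  exact h2 h1

/-- The subcomplex `M·I` of a chain complex `M` of left `R`-modules, whose degree-`n` term is
the submodule `I • M_n` generated by `{a • m : a ∈ I, m ∈ M_n}`. -/
def smulSubcomplex {R : Type} [Ring R] (I : Ideal R)
    (M : ChainComplex (ModuleCat.{0} R) ℤ) : ChainComplex (ModuleCat.{0} R) ℤ where
  X n := ModuleCat.of R (I • (⊤ : Submodule R (M.X n)) : Submodule R (M.X n))
  d i j := ModuleCat.ofHom (LinearMap.restrict (M.d i j).hom (smul_top_le I (M.d i j).hom))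
  shape i j h := by
    ext x
    first
      | exact congrArg (fun f => ModuleCat.Hom.hom f x.1) (M.shape i j h)
      | simp [M.shape i j h]
  d_comp_d' i j k _ _ := by
    ext x
    first
      | exact congrArg (fun f => ModuleCat.Hom.hom f x.1) (M.d_comp_d i j k)
      | simp [LinearMap.restrict_apply]

/-- The inclusion chain map `M·I ⟶ M`. -/
def smulSubcomplexIncl {R : Type} [Ring R] (I : Ideal R)
    (M : ChainComplex (ModuleCat.{0} R) ℤ) : smulSubcomplex I M ⟶ M where
  f n := ModuleCat.ofHom (I • (⊤ : Submodule R (M.X n))).subtype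
  comm' i j _ := by
    ext x
    rfl

end Subcomplex

variable (k : Type) [Field k] (A : Type) [NonUnitalRing A] [Module k A]
  [SMulCommClass k A A] [IsScalarTower k A A]
  (P : Type) [AddCommGroup P] [Module (Unitization k A) P]

/-- The copy of the non-unital algebra `A` inside its unitalization `Unitization k A`: the
two-sided ideal of elements with vanishing scalar component. -/
noncomputable def idealA : Ideal (Unitization k A) :=
  RingHom.ker (Unitization.fstHom k A).toRingHom

/-- The submodule `A•P` of a `Unitization k A`-module `P`. -/
noncomputable def AP : Submodule (Unitization k A) P :=
  idealA k A • (⊤ : Submodule (Unitization k A) P)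

/-- The quotient `P ⧸ A•P` is killed by `A`, hence is a `k`-vector space. -/
noncomputable instance quotKMod : Module k (P ⧸ AP k A P) :=
  Module.compHom _ (algebraMap k (Unitization k A))

/-- `P♯ := (P ⧸ A•P) ⊗ₖ U` where `U = Unitization k A`. -/
noncomputable def Psharp : Type := (P ⧸ AP k A P) ⊗[k] (Unitization k A)

noncomputable instance : AddCommGroup (Psharp k A P) :=
  inferInstanceAs (AddCommGroup ((P ⧸ AP k A P) ⊗[k] (Unitization k A)))

/-- `P♯` is a left `U`-module via the action of `U` on the right tensor factor. -/
noncomputable instance : Module (Unitization k A) (Psharp k A P) where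
  smul u x := LinearMap.lTensor (P ⧸ AP k A P) (LinearMap.mulLeft k u) x
  one_smul x := by
    show LinearMap.lTensor _ (LinearMap.mulLeft k 1) x = x
    rw [LinearMap.mulLeft_one, LinearMap.lTensor_id]; rfl
  mul_smul u v x := by
    show LinearMap.lTensor _ (LinearMap.mulLeft k (u * v)) x = _
    rw [LinearMap.mulLeft_mul, LinearMap.lTensor_comp]
    rfl
  smul_zero u := map_zero _
  smul_add u x y := map_add _ x y
  add_smul u v x := by
    show LinearMap.lTensor _ (LinearMap.mulLeft k (u + v)) x = _
    have : LinearMap.mulLeft k (u + v) = LinearMap.mulLeft k u + LinearMap.mulLeft k v :=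
      LinearMap.ext fun w => by simp [add_mul]
    rw [this, LinearMap.lTensor_add]
    rfl
  zero_smul x := by
    show LinearMap.lTensor _ (LinearMap.mulLeft k (0 : Unitization k A)) x = 0
    have : LinearMap.mulLeft k (0 : Unitization k A) = 0 :=
      LinearMap.ext fun w => by simp
    rw [this, LinearMap.lTensor_zero]; rfl

/-- The terms of the two-term complex `E = (P → P♯)`: `P` in degree `1`, `P♯` in degree `0`,
and `0` elsewhere. -/
noncomputable def EX (n : ℤ) : ModuleCat.{0} (Unitization k A) :=
  if n = 1 then ModuleCat.of (Unitization k A) P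
  else if n = 0 then ModuleCat.of (Unitization k A) (Psharp k A P)
  else ModuleCat.of (Unitization k A) PUnit

lemma EX_one : EX k A P 1 = ModuleCat.of (Unitization k A) P := by simp [EX]

lemma EX_zero : EX k A P 0 = ModuleCat.of (Unitization k A) (Psharp k A P) := by simp [EX]

/-- The two-term chain complex `E` with `P` in degree `1`, `P♯` in degree `0` and
differential `φ`. -/
noncomputable def Ecomplex (φ : P →ₗ[Unitization k A] Psharp k A P) :
    ChainComplex (ModuleCat.{0} (Unitization k A)) ℤ where
  X := EX k A P
  d i j :=
    if h : i = 1 ∧ j = 0 then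
      eqToHom (show EX k A P i = ModuleCat.of (Unitization k A) P by
          rw [h.1, EX_one]) ≫ ModuleCat.ofHom φ ≫
        eqToHom (show ModuleCat.of (Unitization k A) (Psharp k A P) = EX k A P j by
          rw [h.2, EX_zero])
    else 0
  shape i j h := by
    rw [dif_neg]
    rintro ⟨rfl, rfl⟩
    exact h (by simp)
  d_comp_d' i j k' hij hjk := by
    by_cases h2 : j = 1 ∧ k' = 0
    · have h1 : ¬ (i = 1 ∧ j = 0) := fun hc => by omega
      rw [dif_neg h1]; simp
    · rw [dif_neg h2]; simp

open TensorProduct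

noncomputable def Homotopy.toSubNullHomotopicMap {ι V : Type*} [Category V] [Preadditive V]
    {c : ComplexShape ι} {C D : HomologicalComplex V c} (f : C ⟶ D) (hom : ∀ i j, C.X i ⟶ D.X j)
    (zero : ∀ i j, ¬c.Rel j i → hom i j = 0) :
    Homotopy f (f - Homotopy.nullHomotopicMap hom) :=
  Homotopy.equivSubZero.symm
    ((Homotopy.ofEq (sub_sub_cancel _ _)).trans (Homotopy.nullHomotopy hom zero))

section SmulSubcomplex

variable {R : Type} [Ring R] (I : Ideal R) {M : ChainComplex (ModuleCat.{0} R) ℤ}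

def smulSubcomplexLift (r : M ⟶ M) (hr : ∀ n x, (r.f n).hom x ∈ I • (⊤ : Submodule R (M.X n))) :
    M ⟶ smulSubcomplex I M where
  f n := ModuleCat.ofHom ((r.f n).hom.codRestrict _ (hr n))
  comm' i j hij := by
    ext x
    exact Subtype.ext (congr_arg (fun f => f.hom x) (r.comm i j))

lemma smulSubcomplexLift_comp_incl (r : M ⟶ M)
    (hr : ∀ n x, (r.f n).hom x ∈ I • (⊤ : Submodule R (M.X n))) :
    smulSubcomplexLift I r hr ≫ smulSubcomplexIncl I M = r :=
  rfl

def Homotopy.restrictSmulSubcomplex {r : M ⟶ M} (H : Homotopy (𝟙 M) r)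
    (hr : ∀ n x, (r.f n).hom x ∈ I • (⊤ : Submodule R (M.X n))) :
    Homotopy (𝟙 (smulSubcomplex I M)) (smulSubcomplexIncl I M ≫ smulSubcomplexLift I r hr) where
  hom i j := ModuleCat.ofHom ((H.hom i j).hom.restrict (smul_top_le I _))
  zero i j hij := by
    ext x
    exact congr_arg (fun f => f.hom x.1) (H.zero i j hij)
  comm i := by
    ext x
    exact Subtype.ext (congr_arg (fun f => f.hom x.1) (H.comm i))

def smulSubcomplexHomotopyEquiv {r : M ⟶ M} (H : Homotopy (𝟙 M) r)
    (hr : ∀ n x, (r.f n).hom x ∈ I • (⊤ : Submodule R (M.X n))) :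
    HomotopyEquiv (smulSubcomplex I M) M where
  hom := smulSubcomplexIncl I M
  inv := smulSubcomplexLift I r hr
  homotopyHomInvId := (H.restrictSmulSubcomplex I hr).symm
  homotopyInvHomId := (Homotopy.ofEq (smulSubcomplexLift_comp_incl I r hr)).trans H.symm

end SmulSubcomplex

section LiftQuotientEquiv

variable {R : Type} [Ring R] (I : Ideal R) {M N : Type} [AddCommGroup M] [Module R M]
  [AddCommGroup N] [Module R N] [Module.Projective R M] [Module.Projective R N]

theorem Module.Projective.exists_lift_quotientEquiv
    (e : (M ⧸ I • (⊤ : Submodule R M)) ≃ₗ[R] N ⧸ I • (⊤ : Submodule R N)) :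
    ∃ (φ : M →ₗ[R] N) (ψ : N →ₗ[R] M),
      (∀ m, m - ψ (φ m) ∈ I • (⊤ : Submodule R M)) ∧
      (∀ n, n - φ (ψ n) ∈ I • (⊤ : Submodule R N)) := by
  obtain ⟨φ, hφ⟩ := Module.projective_lifting_property (Submodule.mkQ _)
    (e.toLinearMap ∘ₗ Submodule.mkQ _) (Submodule.mkQ_surjective _)
  obtain ⟨ψ, hψ⟩ := Module.projective_lifting_property (Submodule.mkQ _)
    (e.symm.toLinearMap ∘ₗ Submodule.mkQ _) (Submodule.mkQ_surjective _)
  have hφ' (m : M) : Submodule.Quotient.mk (φ m) = e (Submodule.Quotient.mk m) :=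
    LinearMap.congr_fun hφ m
  have hψ' (n : N) : Submodule.Quotient.mk (ψ n) = e.symm (Submodule.Quotient.mk n) :=
    LinearMap.congr_fun hψ n
  refine ⟨φ, ψ, fun m => ?_, fun n => ?_⟩
  · rw [← Submodule.Quotient.eq, hψ', hφ', e.symm_apply_apply]
  · rw [← Submodule.Quotient.eq, hφ', hψ', e.apply_symm_apply]

end LiftQuotientEquiv

section UnitizationModules

variable {k A P}

lemma sub_algebraMap_fst_mem_idealA (u : Unitization k A) :
    u - algebraMap k (Unitization k A) u.fst ∈ idealA k A := by
  rw [idealA, RingHom.mem_ker, map_sub, AlgHom.toRingHom_eq_coe, RingHom.coe_coe, AlgHom.commutes,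
    Unitization.fstHom_apply, Algebra.algebraMap_self, RingHom.id_apply, sub_self]

section KilledModule

variable {V : Type} [AddCommGroup V] [Module (Unitization k A) V] [Module k V]
  [IsScalarTower k (Unitization k A) V]

lemma smul_eq_fst_smul (hV : ∀ a ∈ idealA k A, ∀ v : V, a • v = 0) (u : Unitization k A) (v : V) :
    u • v = u.fst • v := by
  have := hV _ (sub_algebraMap_fst_mem_idealA u) v
  rwa [sub_smul, algebraMap_smul, sub_eq_zero] at this

lemma finite_of_idealA_smul_eq_zero [Module.Finite (Unitization k A) V]
    (hV : ∀ a ∈ idealA k A, ∀ v : V, a • v = 0) : Module.Finite k V := by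
  obtain ⟨S, hS⟩ := Module.Finite.fg_top (R := Unitization k A) (M := V)
  refine ⟨⟨S, Submodule.eq_top_iff'.2 fun x => ?_⟩⟩
  have hx : x ∈ Submodule.span (Unitization k A) (S : Set V) := hS ▸ Submodule.mem_top
  induction hx using Submodule.span_induction with
  | mem y hy => exact Submodule.subset_span hy
  | zero => exact zero_mem _
  | add y z _ _ hy hz => exact add_mem hy hz
  | smul u y _ hy => exact smul_eq_fst_smul hV u y ▸ Submodule.smul_mem _ _ hy

noncomputable def baseChangeSmul : Unitization k A ⊗[k] V →ₗ[Unitization k A] V :=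
  AlgebraTensorModule.lift (LinearMap.toSpanSingleton _ _ LinearMap.id)

@[simp]
lemma baseChangeSmul_tmul (u : Unitization k A) (v : V) : baseChangeSmul (u ⊗ₜ[k] v) = u • v :=
  rfl

lemma sub_one_tmul_baseChangeSmul_mem (hV : ∀ a ∈ idealA k A, ∀ v : V, a • v = 0)
    (x : Unitization k A ⊗[k] V) :
    x - 1 ⊗ₜ baseChangeSmul x ∈ idealA k A • (⊤ : Submodule (Unitization k A) _) := by
  induction x using TensorProduct.induction_on with
  | zero => simp
  | tmul u v =>
    have key : u ⊗ₜ[k] v - 1 ⊗ₜ baseChangeSmul (u ⊗ₜ[k] v) =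
        (u - algebraMap k (Unitization k A) u.fst) • (1 ⊗ₜ[k] v : Unitization k A ⊗[k] V) := by
      rw [baseChangeSmul_tmul, smul_eq_fst_smul hV, smul_tmul', smul_eq_mul, mul_one, sub_tmul,
        Algebra.algebraMap_eq_smul_one, smul_tmul]
    rw [key]
    exact Submodule.smul_mem_smul (sub_algebraMap_fst_mem_idealA u) Submodule.mem_top
  | add x y hx hy =>
    rw [map_add, tmul_add, add_sub_add_comm]
    exact add_mem hx hy

lemma ker_baseChangeSmul (hV : ∀ a ∈ idealA k A, ∀ v : V, a • v = 0) :
    LinearMap.ker (baseChangeSmul (k := k) (A := A) (V := V)) =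
      idealA k A • (⊤ : Submodule (Unitization k A) _) := by
  refine le_antisymm (fun x hx => ?_) (Submodule.smul_le.2 fun a ha x _ => ?_)
  · simpa [LinearMap.mem_ker.1 hx] using sub_one_tmul_baseChangeSmul_mem hV x
  · rw [LinearMap.mem_ker, map_smul, hV a ha]

end KilledModule

section Psharp

instance : IsScalarTower k (Unitization k A) (P ⧸ AP k A P) where
  smul_assoc c u v := by
    change (c • u) • v = algebraMap k (Unitization k A) c • u • v
    rw [Algebra.smul_def, mul_smul]

lemma smul_quotient_eq_zero_of_mem_idealA (a : Unitization k A) (ha : a ∈ idealA k A)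
    (v : P ⧸ AP k A P) : a • v = 0 := by
  obtain ⟨p, rfl⟩ := Submodule.mkQ_surjective _ v
  rw [← map_smul, Submodule.mkQ_apply, Submodule.Quotient.mk_eq_zero]
  exact Submodule.smul_mem_smul ha Submodule.mem_top

noncomputable def Psharp.commEquiv :
    Psharp k A P ≃ₗ[Unitization k A] Unitization k A ⊗[k] (P ⧸ AP k A P) where
  __ := TensorProduct.comm k (P ⧸ AP k A P) (Unitization k A)
  map_smul' u x := by
    change TensorProduct.comm k _ _ (LinearMap.lTensor _ (LinearMap.mulLeft k u) x) =
      u • TensorProduct.comm k _ _ x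
    induction x using TensorProduct.induction_on with
    | zero => simp
    | tmul v w =>
      rw [LinearMap.lTensor_tmul, LinearMap.mulLeft_apply, comm_tmul, comm_tmul, smul_tmul',
        smul_eq_mul]
    | add x y hx hy => rw [map_add, map_add, hx, hy, map_add, smul_add]

instance : Module.Free (Unitization k A) (Psharp k A P) :=
  Module.Free.of_equiv Psharp.commEquiv.symm

lemma Psharp.finite [Module.Finite (Unitization k A) P] :
    Module.Finite (Unitization k A) (Psharp k A P) :=
  haveI := finite_of_idealA_smul_eq_zero (V := P ⧸ AP k A P) smul_quotient_eq_zero_of_mem_idealA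
  Module.Finite.equiv Psharp.commEquiv.symm

noncomputable def Psharp.quotientEquiv :
    (Psharp k A P ⧸ idealA k A • (⊤ : Submodule (Unitization k A) (Psharp k A P)))
      ≃ₗ[Unitization k A] P ⧸ AP k A P :=
  (Submodule.Quotient.equiv _ _ Psharp.commEquiv
      (by rw [Submodule.map_smul'', Submodule.map_top, LinearEquiv.range])).trans <|
    (Submodule.quotEquivOfEq _ _
      (ker_baseChangeSmul smul_quotient_eq_zero_of_mem_idealA).symm).trans <|
      baseChangeSmul.quotKerEquivOfSurjective fun v => ⟨1 ⊗ₜ v, by simp⟩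

end Psharp

section Ecomplex

variable (φ : P →ₗ[Unitization k A] Psharp k A P) (ψ : Psharp k A P →ₗ[Unitization k A] P)

noncomputable def Ecomplex.homotopyHom (i j : ℤ) :
    (Ecomplex k A P φ).X i ⟶ (Ecomplex k A P φ).X j :=
  if h : i = 0 ∧ j = 1 then
    eqToHom (show EX k A P i = _ by rw [h.1, EX_zero]) ≫ ModuleCat.ofHom ψ ≫
      eqToHom (show _ = EX k A P j by rw [h.2, EX_one])
  else 0

lemma Ecomplex.homotopyHom_eq_zero {i j : ℤ} (h : ¬(i = 0 ∧ j = 1)) :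
    Ecomplex.homotopyHom φ ψ i j = 0 :=
  dif_neg h

lemma Ecomplex.homotopyHom_eq_zero_of_not_rel (i j : ℤ) (h : ¬(ComplexShape.down ℤ).Rel j i) :
    Ecomplex.homotopyHom φ ψ i j = 0 :=
  Ecomplex.homotopyHom_eq_zero φ ψ fun hij => h (by simp [hij.1, hij.2])

lemma Ecomplex.sub_dNext_add_prevD_mem (hψφ : ∀ p : P, p - ψ (φ p) ∈ AP k A P)
    (hφψ : ∀ q : Psharp k A P,
      q - φ (ψ q) ∈ idealA k A • (⊤ : Submodule (Unitization k A) (Psharp k A P)))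
    (n : ℤ) (x : (Ecomplex k A P φ).X n) :
    x - (dNext n (Ecomplex.homotopyHom φ ψ) + prevD n (Ecomplex.homotopyHom φ ψ)).hom x ∈
      idealA k A • (⊤ : Submodule (Unitization k A) ((Ecomplex k A P φ).X n)) := by
  by_cases h1 : n = 1
  · subst h1
    have hprev : prevD 1 (Ecomplex.homotopyHom φ ψ) = 0 := by
      rw [prevD_eq _ (show (ComplexShape.down ℤ).Rel 2 1 by simp),
        Ecomplex.homotopyHom_eq_zero φ ψ (by omega), Limits.zero_comp]
    rw [dNext_eq _ (show (ComplexShape.down ℤ).Rel 1 0 by simp), hprev, add_zero]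
    exact hψφ x
  by_cases h0 : n = 0
  · subst h0
    have hnext : dNext 0 (Ecomplex.homotopyHom φ ψ) = 0 := by
      rw [dNext_eq _ (show (ComplexShape.down ℤ).Rel 0 (-1) by simp),
        Ecomplex.homotopyHom_eq_zero φ ψ (by omega), Limits.comp_zero]
    rw [prevD_eq _ (show (ComplexShape.down ℤ).Rel 1 0 by simp), hnext, zero_add]
    exact hφψ x
  · have : Subsingleton ((Ecomplex k A P φ).X n) := by
      change Subsingleton (EX k A P n)
      rw [EX, if_neg h1, if_neg h0]
      exact inferInstanceAs (Subsingleton PUnit)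
    rw [Subsingleton.elim (x - _) 0]
    exact zero_mem _

end Ecomplex

end UnitizationModules

/-- Let `A` be a non-unital algebra over a field `k`, `U = Unitization k A`, and `P` a
finitely generated projective left `U`-module.  Set `P♯ := (P ⧸ A•P) ⊗ₖ U`.  Then:
(i) `P♯` is a finitely generated projective (indeed free) `U`-module;
(ii) there exist `U`-linear maps `φ : P → P♯` and `ψ : P♯ → P` with
`(id − ψ∘φ)(P) ⊆ A•P` and `(id − φ∘ψ)(P♯) ⊆ A•P♯`;
(iii) for any such `φ, ψ`, the inclusion of the subcomplex `E·A` into the two-term complex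
`E = (P → P♯)` (with `P` in degree `1`, `P♯` in degree `0`, differential `φ`) is a homotopy
equivalence of chain complexes. -/
theorem stmt6 (hPfin : Module.Finite (Unitization k A) P)
    (hPproj : Module.Projective (Unitization k A) P) :
    (Module.Finite (Unitization k A) (Psharp k A P) ∧
      Module.Free (Unitization k A) (Psharp k A P) ∧
      Module.Projective (Unitization k A) (Psharp k A P)) ∧
    (∃ (φ : P →ₗ[Unitization k A] Psharp k A P) (ψ : Psharp k A P →ₗ[Unitization k A] P),
      (∀ p : P, p - ψ (φ p) ∈ AP k A P) ∧
      (∀ q : Psharp k A P,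
        q - φ (ψ q) ∈ idealA k A • (⊤ : Submodule (Unitization k A) (Psharp k A P)))) ∧
    (∀ (φ : P →ₗ[Unitization k A] Psharp k A P) (ψ : Psharp k A P →ₗ[Unitization k A] P),
      (∀ p : P, p - ψ (φ p) ∈ AP k A P) →
      (∀ q : Psharp k A P,
        q - φ (ψ q) ∈ idealA k A • (⊤ : Submodule (Unitization k A) (Psharp k A P))) →
      ∃ e : HomotopyEquiv (smulSubcomplex (idealA k A) (Ecomplex k A P φ))
          (Ecomplex k A P φ),
        e.hom = smulSubcomplexIncl (idealA k A) (Ecomplex k A P φ)) := by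
  refine ⟨⟨Psharp.finite, inferInstance, inferInstance⟩,
    Module.Projective.exists_lift_quotientEquiv (idealA k A) Psharp.quotientEquiv.symm,
    fun φ ψ hψφ hφψ => ⟨smulSubcomplexHomotopyEquiv (idealA k A)
      (Homotopy.toSubNullHomotopicMap (𝟙 _) (Ecomplex.homotopyHom φ ψ)
        (Ecomplex.homotopyHom_eq_zero_of_not_rel φ ψ))
      (Ecomplex.sub_dNext_add_prevD_mem φ ψ hψφ hφψ), rfl⟩⟩
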